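/- arXiv:2512.15897 — 2 statements merged into one kernel-verified Lean document; each statement's English description precedes it below -/
import Mathlib

section
/- For every (01)-sequence ε with M zeros and N ones, every index i∈I, and all α,β∈Q, one has q_ε(α,β)=q_{εs_i}(s_iα,s_iβ). -/
/-!
STATEMENT 0: For every (01)-sequence ε with M zeros and N ones, every index i ∈ I,
and all α, β ∈ Q, one has q_ε(α,β) = q_{εs_i}(s_i α, s_i β).
-/

noncomputable section
namespace GQG

/-- The base field `k = ℚ(q)`. -/
abbrev KK : Type := RatFunc ℚ

/-- The indeterminate `q`. -/
def qv : KK := RatFunc.X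

/-- `q_i = (-1)^{ε_i} q^{(-1)^{ε_i}}`, i.e. `q` if `ε_i = 0` and `-q⁻¹` if `ε_i = 1`. -/
def qiF {F : Type*} [Field F] (q : F) {n : ℕ} (ε : ZMod n → Bool) (i : ZMod n) : F :=
  if ε i then -q⁻¹ else q

/-- Elements of the weight lattice `P̊ = ⊕ ℤ δ_i`, as coordinate functions. -/
abbrev Wt (n : ℕ) := ZMod n → ℤ

def deltaW {n : ℕ} (i : ZMod n) : Wt n := fun j => if j = i then 1 else 0

/-- `cl(α_i) = δ_i - δ_{i+1} ∈ P̊`. -/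
def alphaW {n : ℕ} (i : ZMod n) : Wt n := deltaW i - deltaW (i + 1)

/-- The symmetric biadditive function `q_ε : P̊ × P̊ → k^×`,
`q_ε(Σ λ_i δ_i, Σ μ_i δ_i) = Π_i q_i^{λ_i μ_i}`. -/
def qpairF {F : Type*} [Field F] (q : F) {n : ℕ} [NeZero n] (ε : ZMod n → Bool)
    (l m : Wt n) : F :=
  ∏ i : ZMod n, (qiF q ε i) ^ (l i * m i)

/-- Number of `0`'s in the sequence `ε`. -/
def zeroCount {n : ℕ} (ε : ZMod n → Bool) : ℕ := Nat.card {i : ZMod n // ε i = false}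

/-- The right action of the simple reflection `s_i` on `(01)`-sequences by place
permutation (swapping the `i`-th and `(i+1)`-st entries, indices mod `n`). -/
def swapSeq {n : ℕ} (ε : ZMod n → Bool) (i : ZMod n) : ZMod n → Bool :=
  fun j => if j = i then ε (i + 1) else if j = i + 1 then ε i else ε j

/-- Elements of the affine root lattice `Q = ⊕_{i∈I} ℤ α_i`, recorded by their
coordinates in the basis `(α_i)_{i∈I}`. -/
abbrev QC (n : ℕ) := ZMod n → ℤ

/-- Coordinates of `α_i` in `Q`. -/
def alphaQ {n : ℕ} (i : ZMod n) : QC n := fun j => if j = i then 1 else 0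

/-- The action of `s_i` on `Q`:
`s_i(α_j) = -α_i` if `j = i`, `α_j + α_i` if `j = i ± 1`, and `α_j` otherwise. -/
def sQ {n : ℕ} (i : ZMod n) (c : QC n) : QC n :=
  fun m => if m = i then c (i - 1) + c (i + 1) - c i else c m

/-- The projection `cl : Q → P̊`, in coordinates: `cl(Σ c_i α_i) = Σ c_i (δ_i - δ_{i+1})`. -/
def clQ {n : ℕ} (c : QC n) : Wt n := fun m => c m - c (m - 1)

/-- Lemma 2.5 of the paper: for every `(01)`-sequence `ε` with `M` zeros
and `N` ones, every `i ∈ I`, and all `α, β ∈ Q`, one has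
`q_ε(α, β) = q_{ε s_i}(s_i α, s_i β)`. -/
theorem qpair_swap_invariant (M N : ℕ) (hM : 0 < M) (hN : 0 < N) (hMN : M ≠ N)
    (hn : 3 ≤ M + N) [NeZero (M + N)]
    (ε : ZMod (M + N) → Bool) (hε : zeroCount ε = M)
    (i : ZMod (M + N)) (α β : QC (M + N)) :
    qpairF qv ε (clQ α) (clQ β) =
      qpairF qv (swapSeq ε i) (clQ (sQ i α)) (clQ (sQ i β)) := by
  have h1 : (1 : ZMod (M + N)) ≠ 0 := by
    intro h
    have h' : ((1 : ℕ) : ZMod (M + N)) = 0 := by exact_mod_cast h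
    have hd := (ZMod.natCast_eq_zero_iff 1 (M + N)).mp h'
    have := Nat.le_of_dvd one_pos hd
    omega
  have hii : i + 1 ≠ i := by
    intro h
    exact h1 (add_eq_left.mp h)
  have hswap : ∀ j, swapSeq ε i j = ε (Equiv.swap i (i + 1) j) := by
    intro j
    simp only [swapSeq, Equiv.swap_apply_def]
    split_ifs <;> rfl
  have hcl : ∀ (c : QC (M + N)) j,
      clQ (sQ i c) j = clQ c (Equiv.swap i (i + 1) j) := by
    intro c j
    rcases eq_or_ne j i with rfl | hji
    · have hpred : j - 1 ≠ j := by
        intro h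
        exact h1 (add_eq_left.mp (sub_eq_iff_eq_add.mp h).symm)
      simp only [clQ, sQ, Equiv.swap_apply_left]
      simp only [if_true, if_neg hpred, add_sub_cancel_right]
      ring
    · rcases eq_or_ne j (i + 1) with rfl | hj1
      · simp only [clQ, sQ, Equiv.swap_apply_right]
        rw [if_neg hii, add_sub_cancel_right, if_pos rfl]
        ring
      · have hj2 : j - 1 ≠ i := by
          intro h
          apply hj1
          have := congrArg (fun x => x + 1) h
          simpa using this
        rw [Equiv.swap_apply_of_ne_of_ne hji hj1]
        simp only [clQ, sQ, if_neg hji, if_neg hj2]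
  have hterm : ∀ j, qiF qv (swapSeq ε i) j ^ (clQ (sQ i α) j * clQ (sQ i β) j)
      = (fun m => qiF qv ε m ^ (clQ α m * clQ β m)) (Equiv.swap i (i + 1) j) := by
    intro j
    rw [hcl α, hcl β]
    simp only [qiF, hswap]
  calc qpairF qv ε (clQ α) (clQ β)
      = ∏ j : ZMod (M + N),
          (fun m => qiF qv ε m ^ (clQ α m * clQ β m)) (Equiv.swap i (i + 1) j) :=
        (Equiv.prod_comp (Equiv.swap i (i + 1))
          (fun m => qiF qv ε m ^ (clQ α m * clQ β m))).symm
    _ = qpairF qv (swapSeq ε i) (clQ (sQ i α)) (clQ (sQ i β)) := by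
        unfold qpairF
        exact Finset.prod_congr rfl (fun j _ => (hterm j).symm)

end GQG
end
end

section
/- Let ε=ε_{M|N}=(0,…,0,1,…,1) (M zeros then N ones), M,N>0, M≠N. For each r≥1, let D^r be the diagonal (n−1)×(n−1) matrix with (i,i)-entry (−1)^{rε_i}. Then det(C(q^r,q̃^r)·D^r)=−(q^{r(M−N)}−q^{−r(M−N)})/(q^r−q^{−r}) in k=Q(q); in particular, C(q^r,q̃^r) is invertible. -/
/-!
STATEMENT 15: determinant of the specialized two-parameter deformed Cartan matrix
`C(q^r, q̃^r) ⬝ D^r` for `ε = ε_{M|N}`.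
-/

set_option linter.unreachableTactic false
set_option linter.unusedTactic false
noncomputable section
namespace GQG

def qAF {F : Type*} [Field F] (q : F) {n : ℕ} [NeZero n] (ε : ZMod n → Bool)
    (i j : ZMod n) : F :=
  qpairF q ε (alphaW i) (alphaW j)

/-- The standard `(01)`-sequence `ε_{M|N} = (0,…,0,1,…,1)` (`M` zeros, then `N` ones),
with positions `1,…,n` read modulo `n = M+N` (so position `n` corresponds to `0`). -/
def epsStd (M N : ℕ) : ZMod (M + N) → Bool :=
  fun i => decide ¬(1 ≤ i.val ∧ i.val ≤ M)


/-! ### Auxiliary machinery -/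

section TriDiag
variable {R : Type*} [CommRing R]

/-- Tridiagonal matrix with diagonal `d`, superdiagonal `s`, subdiagonal `t`. -/
def triMat (d s t : ℕ → R) (k : ℕ) : Matrix (Fin k) (Fin k) R :=
  Matrix.of fun i j =>
    if (i:ℕ) = (j:ℕ) then d i else if (i:ℕ)+1 = (j:ℕ) then s i
    else if (j:ℕ)+1 = (i:ℕ) then t j else 0

/-- Continuant: determinant of a tridiagonal matrix by front expansion. -/
def cont : ℕ → (ℕ → R) → (ℕ → R) → (ℕ → R) → R
  | 0, _, _, _ => 1
  | 1, d, _, _ => d 0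
  | (k+2), d, s, t =>
      d 0 * cont (k+1) (fun i => d (i+1)) (fun i => s (i+1)) (fun i => t (i+1))
        - s 0 * t 0 * cont k (fun i => d (i+2)) (fun i => s (i+2)) (fun i => t (i+2))

lemma valSA {k : ℕ} (j : Fin (k+1)) :
    ((Fin.succAbove 1 j : Fin (k+2)) : ℕ) = if (j:ℕ) < 1 then (j:ℕ) else (j:ℕ)+1 := by
  rw [Fin.succAbove]
  split_ifs with h1 h2 h3
  · simp
  · exact absurd (Fin.lt_def.mp h1) h2
  · exact absurd (Fin.lt_def.mpr (by simpa using h3)) h1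
  · simp

theorem det_triMat (k : ℕ) (d s t : ℕ → R) : (triMat d s t k).det = cont k d s t := by
  induction k using Nat.strong_induction_on generalizing d s t with
  | _ k ih =>
    match k with
    | 0 => simp [cont, Matrix.det_fin_zero]
    | 1 => simp [cont, Matrix.det_fin_one, triMat]
    | (k+2) =>
      set A := triMat d s t (k+2) with hA
      rw [Matrix.det_succ_row_zero, Fin.sum_univ_succ, Fin.sum_univ_succ]
      have hz : ∀ j : Fin k, (-1:R) ^ ((j.succ.succ : Fin (k+2)) : ℕ)
          * A 0 j.succ.succ
          * (A.submatrix Fin.succ (Fin.succAbove j.succ.succ)).det = 0 := by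
        intro j
        have h0 : A 0 j.succ.succ = 0 := by
          simp only [hA, triMat, Matrix.of_apply, Fin.val_succ, Fin.val_zero]
          split_ifs <;> first | rfl | omega | exact (False.elim (by assumption))
        rw [h0]; ring
      rw [Finset.sum_eq_zero (fun j _ => hz j), add_zero]
      have hA00 : A 0 0 = d 0 := by
        simp [hA, triMat]
      have hA01 : A 0 (Fin.succ 0) = s 0 := by
        simp only [hA, triMat, Matrix.of_apply, Fin.val_succ, Fin.val_zero]
        norm_num
      have hsub0 : A.submatrix Fin.succ (Fin.succAbove 0)
          = triMat (fun i => d (i+1)) (fun i => s (i+1)) (fun i => t (i+1)) (k+1) := by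
        ext i j
        simp only [hA, triMat, Matrix.submatrix_apply, Matrix.of_apply, Fin.succAbove_zero,
          Fin.val_succ]
        split_ifs <;> first | rfl | omega | exact (False.elim (by assumption))
      set B := A.submatrix Fin.succ (Fin.succAbove (Fin.succ 0)) with hB
      have hsA1 : (Fin.succ (0 : Fin (k+1))) = (1 : Fin (k+2)) := by
        simp [Fin.ext_iff]
      have hBdet : B.det = t 0 *
          (cont k (fun i => d (i+2)) (fun i => s (i+2)) (fun i => t (i+2))) := by
        rw [Matrix.det_succ_column_zero, Fin.sum_univ_succ]
        have hz2 : ∀ i : Fin k, (-1:R) ^ ((i.succ : Fin (k+1)) : ℕ)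
            * B i.succ 0 * (B.submatrix (Fin.succAbove i.succ) Fin.succ).det = 0 := by
          intro i
          have h0 : B i.succ 0 = 0 := by
            simp only [hB, hA, hsA1, triMat, Matrix.submatrix_apply, Matrix.of_apply,
              Fin.val_succ]
            rw [show ((Fin.succAbove (1 : Fin (k+2)) 0 : Fin (k+2)) : ℕ) = 0 by
              rw [valSA]; simp]
            split_ifs <;> first | rfl | omega | exact (False.elim (by assumption))
          rw [h0]; ring
        rw [Finset.sum_eq_zero (fun i _ => hz2 i), add_zero]
        have hB00 : B 0 0 = t 0 := by
          simp only [hB, hA, hsA1, triMat, Matrix.submatrix_apply, Matrix.of_apply,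
            Fin.val_succ, Fin.val_zero]
          rw [show ((Fin.succAbove (1 : Fin (k+2)) 0 : Fin (k+2)) : ℕ) = 0 by
            rw [valSA]; simp]
          norm_num
        have hsub2 : B.submatrix (Fin.succAbove 0) Fin.succ
            = triMat (fun i => d (i+2)) (fun i => s (i+2)) (fun i => t (i+2)) k := by
          ext i j
          simp only [hB, hA, hsA1, triMat, Matrix.submatrix_apply, Matrix.of_apply,
            Fin.succAbove_zero, Fin.val_succ]
          rw [show ((Fin.succAbove (1 : Fin (k+2)) j.succ : Fin (k+2)) : ℕ) = (j:ℕ)+2 by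
            rw [valSA]; simp]
          split_ifs <;> first | rfl | omega | exact (False.elim (by assumption))
        rw [hB00, hsub2, ih k (by omega)]
        simp
      rw [hA00, hA01, hsub0, ih (k+1) (by omega), hBdet]
      simp only [cont, Fin.val_zero, Fin.val_succ, hsA1, Fin.val_one, pow_zero, pow_one]
      ring

theorem cont_mul (k : ℕ) (d s t : ℕ → R) :
    cont k d s t = cont k d (fun i => s i * t i) (fun _ => 1) := by
  induction k using Nat.strong_induction_on generalizing d s t with
  | _ k ih =>
    match k with
    | 0 => rfl
    | 1 => rfl
    | (k+2) =>
      simp only [cont, ih (k+1) (by omega), ih k (by omega), mul_one]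

end TriDiag

section Qint
variable {F : Type*} [Field F] (y : F)

/-- The symmetrized `q`-integer `[z] = (y^z - y^{-z})/(y - y⁻¹)`. -/
def Qn (z : ℤ) : F := (y^z - y^(-z))/(y - y⁻¹)

variable (hy : y ≠ 0) (h1 : y^2 ≠ 1)

include hy h1 in
lemma hbne : y - y⁻¹ ≠ 0 := by
  intro h
  rw [sub_eq_zero] at h
  apply h1
  rw [sq]; nth_rewrite 2 [h]; exact mul_inv_cancel₀ hy

lemma Qn_zero : Qn y 0 = 0 := by simp [Qn]

include hy h1 in
lemma Qn_one : Qn y 1 = 1 := by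
  rw [Qn, zpow_one, zpow_neg, zpow_one, div_self (hbne y hy h1)]

lemma Qn_neg (z : ℤ) : Qn y (-z) = - Qn y z := by
  rw [Qn, Qn, neg_neg, ← neg_div, neg_sub]

include hy in
lemma Qn_rec (z : ℤ) : Qn y (z+1) = (y + y⁻¹) * Qn y z - Qn y (z-1) := by
  rw [Qn, Qn, Qn]
  rw [show -(z+1) = -z - 1 by ring, show -(z-1) = -z + 1 by ring]
  rw [zpow_add_one₀ hy, zpow_sub_one₀ hy, zpow_sub_one₀ hy, zpow_add_one₀ hy]
  rw [mul_div_assoc' (y + y⁻¹), div_sub_div_same]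
  congr 1
  ring

include hy h1 in
theorem contPure (k : ℕ) :
    cont k (fun _ => y + y⁻¹) (fun _ => (1:F)) (fun _ => 1) = Qn y ((k:ℤ)+1) := by
  induction k using Nat.strong_induction_on with
  | _ k ih =>
    match k with
    | 0 => rw [show ((0:ℕ):ℤ)+1 = 1 by norm_num, Qn_one y hy h1]; rfl
    | 1 =>
      show y + y⁻¹ = Qn y (1+1)
      rw [Qn_rec y hy 1, Qn_one y hy h1, sub_self, Qn_zero, sub_zero, mul_one]
    | (k+2) =>
      simp only [cont, ih (k+1) (by omega), ih k (by omega), one_mul]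
      have h := Qn_rec y hy ((k:ℤ)+2)
      rw [show ((k:ℤ)+2)+1 = ((k+2:ℕ):ℤ)+1 by push_cast; ring] at h
      rw [show ((k:ℤ)+2)-1 = ((k:ℤ))+1 by ring] at h
      rw [show ((k+1:ℕ):ℤ)+1 = (k:ℤ)+2 by push_cast; ring]
      rw [h]


include hy h1 in
theorem contZ : ∀ m k : ℕ, m < k →
    cont k (fun i => if i = m then 0 else y + y⁻¹) (fun i => if i = m then (-1:F) else 1)
      (fun _ => 1) = - Qn y (2*(m:ℤ)+1-(k:ℤ)) := by
  intro m
  induction m using Nat.strong_induction_on with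
  | _ m ih =>
    match m with
    | 0 =>
      intro k hk
      match k, hk with
      | 1, _ =>
        show (if (0:ℕ) = 0 then (0:F) else y + y⁻¹) = _
        rw [if_pos rfl, show 2*((0:ℕ):ℤ)+1-((1:ℕ):ℤ) = 0 by norm_num, Qn_zero, neg_zero]
      | (k+2), _ =>
        have e3 : (fun i => if i+2 = 0 then (0:F) else y + y⁻¹) = fun _ => y + y⁻¹ := by
          funext i; simp
        have e4 : (fun i => if i+2 = 0 then (-1:F) else 1) = fun _ => (1:F) := by
          funext i; simp
        simp only [cont, e3, e4, contPure y hy h1 k, one_mul]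
        rw [if_pos trivial, if_pos trivial, zero_mul, zero_sub,
          show 2*((0:ℕ):ℤ)+1-((k+2:ℕ):ℤ) = -((k:ℤ)+1) by push_cast; ring,
          Qn_neg, neg_neg]
        ring
    | 1 =>
      intro k hk
      match k, hk with
      | (k+2), _ =>
        have e1 : (fun i => if i+1 = 1 then (0:F) else y + y⁻¹)
            = fun i => if i = 0 then (0:F) else y + y⁻¹ := by
          funext i; simp
        have e2 : (fun i => if i+1 = 1 then (-1:F) else 1)
            = fun i => if i = 0 then (-1:F) else 1 := by
          funext i; simp
        have e3 : (fun i => if i+2 = 1 then (0:F) else y + y⁻¹) = fun _ => y + y⁻¹ := by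
          funext i; simp
        have e4 : (fun i => if i+2 = 1 then (-1:F) else 1) = fun _ => (1:F) := by
          funext i; simp
        simp only [cont, e1, e2, e3, e4, contPure y hy h1 k,
          ih 0 (by omega) (k+1) (by omega), one_mul]
        rw [if_neg (show (0:ℕ) ≠ 1 by omega), if_neg (show (0:ℕ) ≠ 1 by omega),
          show 2*((0:ℕ):ℤ)+1-((k+1:ℕ):ℤ) = -(k:ℤ) by push_cast; ring,
          show 2*((1:ℕ):ℤ)+1-((k+2:ℕ):ℤ) = -(k:ℤ)+1 by push_cast; ring,
          Qn_rec y hy (-(k:ℤ)), Qn_neg y (k:ℤ),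
          show -(k:ℤ)-1 = -((k:ℤ)+1) by ring, Qn_neg y ((k:ℤ)+1)]
        ring
    | (m+2) =>
      intro k hk
      match k, hk with
      | (k+2), _ =>
        have e1 : (fun i => if i+1 = m+2 then (0:F) else y + y⁻¹)
            = fun i => if i = m+1 then (0:F) else y + y⁻¹ := by
          funext i; simp
        have e2 : (fun i => if i+1 = m+2 then (-1:F) else 1)
            = fun i => if i = m+1 then (-1:F) else 1 := by
          funext i; simp
        have e3 : (fun i => if i+2 = m+2 then (0:F) else y + y⁻¹)
            = fun i => if i = m then (0:F) else y + y⁻¹ := by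
          funext i; simp
        have e4 : (fun i => if i+2 = m+2 then (-1:F) else 1)
            = fun i => if i = m then (-1:F) else 1 := by
          funext i; simp
        simp only [cont, e1, e2, e3, e4,
          ih (m+1) (by omega) (k+1) (by omega), ih m (by omega) k (by omega), one_mul]
        rw [if_neg (show (0:ℕ) ≠ m+2 by omega), if_neg (show (0:ℕ) ≠ m+2 by omega),
          show 2*((m+1:ℕ):ℤ)+1-((k+1:ℕ):ℤ) = 2*(m:ℤ)+2-(k:ℤ) by push_cast; ring,
          show 2*((m:ℕ):ℤ)+1-((k:ℕ):ℤ) = 2*(m:ℤ)+2-(k:ℤ)-1 by push_cast; ring,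
          show 2*((m+2:ℕ):ℤ)+1-((k+2:ℕ):ℤ) = 2*(m:ℤ)+2-(k:ℤ)+1 by push_cast; ring,
          Qn_rec y hy (2*(m:ℤ)+2-(k:ℤ))]
        ring
end Qint


set_option linter.unusedSectionVars false

section SC
variable {F : Type*} [Field F] (y u : F) (hy : y ≠ 0) (hb : y - y⁻¹ ≠ 0) (hu : u * u = 1)

include hu in
lemma hu0 : u ≠ 0 := by rintro rfl; simp at hu

include hu in
lemma huinv : u⁻¹ = u := inv_eq_of_mul_eq_one_right hu

include hy hb hu in
lemma hden2 : (u*y⁻¹) - u*y ≠ 0 := by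
  have h5 : (u*y⁻¹) - u*y = -(u*(y - y⁻¹)) := by ring
  rw [h5, neg_ne_zero]
  exact mul_ne_zero (hu0 u hu) hb

include hy hb in
lemma SC1 : (y*y - (y*y)⁻¹)/(y - y⁻¹) = y + y⁻¹ := by
  rw [div_eq_iff hb]
  field_simp
  ring

include hy hb hu in
lemma hinvuy : (u*y⁻¹)⁻¹ = u*y := by rw [mul_inv, huinv u hu, inv_inv]

include hy hb hu in
lemma SC2 : ((y⁻¹*y⁻¹) - (y⁻¹*y⁻¹)⁻¹)/((u*y⁻¹) - (u*y⁻¹)⁻¹) * u = y + y⁻¹ := by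
  rw [hinvuy y u hy hb hu, div_mul_eq_mul_div, div_eq_iff (hden2 y u hy hb hu)]
  field_simp
  ring

include hy hb hu in
lemma SC3 : ((u*y⁻¹)⁻¹ - u*y⁻¹)/(y - y⁻¹) * u = 1 := by
  rw [hinvuy y u hy hb hu, div_mul_eq_mul_div, div_eq_iff hb]
  field_simp
  linear_combination (y^2-1) * hu

include hy hb hu in
lemma SC4 : ((u*y⁻¹)⁻¹ - u*y⁻¹)/((u*y⁻¹) - (u*y⁻¹)⁻¹) * u = -u := by
  rw [hinvuy y u hy hb hu, ← neg_sub ((u*y⁻¹)) (u*y), neg_div,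
    div_self (hden2 y u hy hb hu)]
  ring

lemma SCneg (a : F) (h : a - a⁻¹ ≠ 0) : (a⁻¹ - a)/(a - a⁻¹) = -1 := by
  rw [← neg_sub, neg_div, div_self h]
end SC

lemma negOne_zpow_neg {F : Type*} [Field F] (z : ℤ) : ((-1:F))^(-z) = (-1:F)^z := by
  rw [zpow_neg, ← inv_zpow, inv_neg, inv_one]

lemma alphaW_apply {n : ℕ} (j k : ZMod n) :
    alphaW j k = (if k = j then 1 else 0) - (if k = j+1 then 1 else 0) := rfl

lemma qAF_eq {F : Type*} [Field F] (q : F) {n : ℕ} [NeZero n] (ε : ZMod n → Bool)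
    (i j : ZMod n) (h : i ≠ i + 1) :
    qAF q ε i j = qiF q ε i ^ (alphaW j i) * qiF q ε (i+1) ^ (-(alphaW j (i+1))) := by
  have hii : alphaW i i = 1 := by
    rw [alphaW_apply]; simp [h]
  have hi1 : alphaW i (i+1) = -1 := by
    rw [alphaW_apply, if_neg (Ne.symm h), if_pos rfl]; ring
  rw [qAF, qpairF]
  rw [← Finset.prod_subset (Finset.subset_univ ({i, i+1} : Finset (ZMod n)))
    (fun x _ hx => ?_)]
  · rw [Finset.prod_insert (by simpa using h), Finset.prod_singleton, hii, hi1, one_mul,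
      neg_one_mul]
  · have hx1 : x ≠ i := fun hh => hx (by simp [hh])
    have hx2 : x ≠ i + 1 := fun hh => hx (by simp [hh])
    rw [alphaW_apply, if_neg hx1, if_neg hx2, sub_zero, zero_mul, zpow_zero]

lemma castInj {n : ℕ} [NeZero n] {p q : ℕ} (hp1 : 1 ≤ p) (hpn : p ≤ n)
    (hq1 : 1 ≤ q) (hqn : q ≤ n) : ((p : ZMod n) = (q : ZMod n)) ↔ p = q := by
  have e : ∀ a : ℕ, 1 ≤ a → a ≤ n → a % n = if a = n then 0 else a := by
    intro a h1 h2
    rcases eq_or_lt_of_le h2 with h|h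
    · simp [h, Nat.mod_self]
    · rw [if_neg (by omega), Nat.mod_eq_of_lt h]
  rw [ZMod.natCast_eq_natCast_iff, Nat.ModEq, e p hp1 hpn, e q hq1 hqn]
  split_ifs <;> omega

lemma epsStd_cast (M N : ℕ) [NeZero (M+N)] (hN : 0 < N) {p : ℕ} (hp1 : 1 ≤ p)
    (hpn : p ≤ M+N) : epsStd M N ((p : ℕ) : ZMod (M+N)) = decide (M < p) := by
  rw [epsStd]
  rw [show ((p : ℕ) : ZMod (M+N)).val = p % (M+N) from ZMod.val_natCast (M+N) p]
  rw [decide_eq_decide]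
  have hn : 0 < M + N := Nat.pos_of_ne_zero (NeZero.ne _)
  rcases eq_or_lt_of_le hpn with h|h
  · rw [h, Nat.mod_self]; omega
  · rw [Nat.mod_eq_of_lt h]; omega

lemma qiF_cast (M N : ℕ) [NeZero (M+N)] (hN : 0 < N) {p : ℕ} (hp1 : 1 ≤ p)
    (hpn : p ≤ M+N) :
    qiF qv (epsStd M N) ((p : ℕ) : ZMod (M+N)) = if M < p then -qv⁻¹ else qv := by
  rw [qiF, epsStd_cast M N hN hp1 hpn]
  by_cases h : M < p <;> simp [h]


section Glem
variable {F : Type*} [Field F] (q : F) (r : ℕ) (hq : q ≠ 0)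
  (hbn : q^r - (q^r)⁻¹ ≠ 0) (hun : ((-1:F)^r) * ((-1:F)^r) = 1)

include hq hbn in
lemma G1 : ((q*q)^(r:ℤ) - (q*q)^(-(r:ℤ)))/(q^(r:ℤ) - q^(-(r:ℤ))) * 1
    = q^r + (q^r)⁻¹ := by
  rw [mul_one]
  simp only [zpow_neg, mul_zpow, zpow_natCast, mul_pow, inv_pow]
  exact SC1 (q^r) (pow_ne_zero r hq) hbn

include hq in
lemma G2 : ((q * -q⁻¹)^(r:ℤ) - (q * -q⁻¹)^(-(r:ℤ)))/(q^(r:ℤ) - q^(-(r:ℤ))) * 1 = 0 := by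
  rw [show q * -q⁻¹ = -1 by rw [mul_neg, mul_inv_cancel₀ hq],
    negOne_zpow_neg, sub_self, zero_div, zero_mul]

include hq hbn hun in
lemma G3 : ((-q⁻¹ * -q⁻¹)^(r:ℤ) - (-q⁻¹ * -q⁻¹)^(-(r:ℤ)))
      /((-q⁻¹)^(r:ℤ) - (-q⁻¹)^(-(r:ℤ))) * (-1:F)^r
    = q^r + (q^r)⁻¹ := by
  rw [neg_mul_neg, show (-q⁻¹ : F) = (-1)*q⁻¹ by ring]
  simp only [zpow_neg, mul_zpow, inv_zpow, zpow_natCast, mul_pow, inv_pow]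
  exact SC2 (q^r) ((-1:F)^r) (pow_ne_zero r hq) hbn hun

include hq hbn in
lemma G4 : ((q^(-1:ℤ))^(r:ℤ) - (q^(-1:ℤ))^(-(r:ℤ)))/(q^(r:ℤ) - q^(-(r:ℤ))) * 1 = -1 := by
  rw [mul_one]
  simp only [zpow_neg, zpow_one, inv_zpow, inv_inv, zpow_natCast, mul_pow, inv_pow]
  exact SCneg (q^r) hbn

include hq hbn hun in
lemma G5 : (((-q⁻¹)^(-1:ℤ))^(r:ℤ) - ((-q⁻¹)^(-1:ℤ))^(-(r:ℤ)))
      /(q^(r:ℤ) - q^(-(r:ℤ))) * (-1:F)^r = 1 := by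
  rw [show (-q⁻¹ : F) = (-1)*q⁻¹ by ring]
  simp only [zpow_neg, zpow_one, mul_zpow, inv_zpow, inv_inv, zpow_natCast, mul_pow, inv_pow]
  exact SC3 (q^r) ((-1:F)^r) (pow_ne_zero r hq) hbn hun

include hq hbn hun in
lemma G6 : (((-q⁻¹)^(-1:ℤ))^(r:ℤ) - ((-q⁻¹)^(-1:ℤ))^(-(r:ℤ)))
      /((-q⁻¹)^(r:ℤ) - (-q⁻¹)^(-(r:ℤ))) * (-1:F)^r = -(-1:F)^r := by
  rw [show (-q⁻¹ : F) = (-1)*q⁻¹ by ring]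
  simp only [zpow_neg, zpow_one, mul_zpow, inv_zpow, inv_inv, zpow_natCast, mul_pow, inv_pow]
  exact SC4 (q^r) ((-1:F)^r) (pow_ne_zero r hq) hbn hun

lemma G7 (a w : F) (h : a^(r:ℤ) - a^(-(r:ℤ)) ≠ 0) :
    ((a^(-1:ℤ))^(r:ℤ) - (a^(-1:ℤ))^(-(r:ℤ)))/(a^(r:ℤ) - a^(-(r:ℤ))) * w = -w := by
  have e1 : (a^(-1:ℤ))^(r:ℤ) = a^(-(r:ℤ)) := by rw [← zpow_mul, neg_one_mul]
  have e2 : (a^(-1:ℤ))^(-(r:ℤ)) = a^(r:ℤ) := by rw [← zpow_mul]; norm_num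
  rw [e1, e2, ← neg_sub, neg_div, div_self h]
  ring
end Glem

variable (M N : ℕ)

/-- The `(n-1) × (n-1)` matrix `C(q^r, q̃^r)` with `(i,j)`-entry
`(q_ε(α_i,α_j)^r − q_ε(α_i,α_j)^{-r}) / (q_i^r − q_i^{-r})`, rows and columns indexed by
`I̊ = {1, …, n-1}`. -/
def Cmat [NeZero (M + N)] (r : ℕ) :
    Matrix (Fin (M + N - 1)) (Fin (M + N - 1)) KK :=
  Matrix.of fun i j =>
    (qAF qv (epsStd M N) ((i.1 + 1 : ℕ) : ZMod (M + N)) ((j.1 + 1 : ℕ) : ZMod (M + N)) ^ (r : ℤ)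
      - qAF qv (epsStd M N) ((i.1 + 1 : ℕ) : ZMod (M + N)) ((j.1 + 1 : ℕ) : ZMod (M + N)) ^ (-(r : ℤ)))
    / (qiF qv (epsStd M N) ((i.1 + 1 : ℕ) : ZMod (M + N)) ^ (r : ℤ)
      - qiF qv (epsStd M N) ((i.1 + 1 : ℕ) : ZMod (M + N)) ^ (-(r : ℤ)))

/-- The diagonal matrix `D^r` with `(i,i)`-entry `(-1)^{r ε_i}`. -/
def Dmat [NeZero (M + N)] (r : ℕ) :
    Matrix (Fin (M + N - 1)) (Fin (M + N - 1)) KK :=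
  Matrix.diagonal fun i =>
    if epsStd M N ((i.1 + 1 : ℕ) : ZMod (M + N)) then (-1 : KK) ^ r else 1

/-- Proposition 3.17 of the paper, first part: for `ε = ε_{M|N}` with
`M ≠ N`, `det (C(q^r, q̃^r) · D^r) = -(q^{r(M-N)} - q^{-r(M-N)})/(q^r - q^{-r})`;
in particular `C(q^r, q̃^r)` is invertible. -/
theorem det_Cmat_Dmat (hM : 0 < M) (hN : 0 < N) (hMN : M ≠ N) (hn : 3 ≤ M + N)
    [NeZero (M + N)] (r : ℕ) (hr : 1 ≤ r) :
    (Cmat M N r * Dmat M N r).det =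
      -(qv ^ ((r : ℤ) * ((M : ℤ) - (N : ℤ))) - qv ^ (-((r : ℤ) * ((M : ℤ) - (N : ℤ)))))
        / (qv ^ (r : ℤ) - qv ^ (-(r : ℤ)))
    ∧ IsUnit (Cmat M N r).det := by
  have hx : (qv:KK) ≠ 0 := by rw [qv]; exact RatFunc.X_ne_zero
  have hXp : ∀ p : ℕ, 0 < p → (qv:KK)^(p:ℕ) ≠ 1 := by
    intro p hp h
    simp only [qv] at h
    have h2 : (Polynomial.X : Polynomial ℚ) ^ p = 1 :=
      IsFractionRing.injective (Polynomial ℚ) KK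
        (by rw [map_pow, map_one, RatFunc.algebraMap_X, h])
    have hdeg := congrArg Polynomial.natDegree h2
    simp only [Polynomial.natDegree_X_pow, Polynomial.natDegree_one] at hdeg
    omega
  have hxz : ∀ z : ℤ, z ≠ 0 → (qv:KK)^z ≠ 1 := by
    intro z hz
    rcases Int.natAbs_eq z with h | h
    · rw [h, zpow_natCast]; exact hXp z.natAbs (by omega)
    · rw [h, zpow_neg, zpow_natCast]
      intro hh
      exact hXp z.natAbs (by omega) (by rw [← inv_inv ((qv:KK)^z.natAbs), hh, inv_one])
  have hu : ((-1:KK)^r) * ((-1:KK)^r) = 1 := by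
    rw [← pow_add, show r + r = 2*r by omega, pow_mul]; norm_num
  set y : KK := qv^r with hydef
  have hy : y ≠ 0 := pow_ne_zero _ hx
  have hy2 : y^2 ≠ 1 := by
    rw [hydef, ← pow_mul]
    rw [show ((qv:KK)^(r*2) : KK) = qv^((r*2 : ℕ) : ℤ) from (zpow_natCast qv (r*2)).symm]
    exact hxz ((r*2 : ℕ) : ℤ) (by omega)
  have hb : y - y⁻¹ ≠ 0 := hbne _ hy hy2
  set dd : ℕ → KK := fun i => if i = M-1 then 0 else y + y⁻¹ with hdd
  set ss : ℕ → KK := fun i => if i+1 < M then (-1:KK) else if i+1 = M then 1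
    else -(-1:KK)^r with hss
  set tt : ℕ → KK := fun i => if i < M then (-1:KK) else -(-1:KK)^r with htt
  have ceq : ∀ a b : ℕ, 1 ≤ a → a ≤ M+N → 1 ≤ b → b ≤ M+N →
      (((a:ℕ) : ZMod (M+N)) = ((b:ℕ) : ZMod (M+N))) = (a = b) :=
    fun a b ha ha' hb hb' => propext (castInj ha ha' hb hb')
  have hdN : (-qv⁻¹ : KK)^(r:ℤ) - (-qv⁻¹)^(-(r:ℤ)) ≠ 0 := by
    rw [show (-qv⁻¹:KK) = (-1)*qv⁻¹ by ring]
    simp only [zpow_neg, mul_zpow, inv_zpow, zpow_natCast, mul_pow, inv_pow]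
    rw [hinvuy (qv^r) ((-1:KK)^r) (pow_ne_zero r hx) hb hu]
    exact hden2 (qv^r) ((-1:KK)^r) (pow_ne_zero r hx) hb hu
  have hdP : (qv : KK)^(r:ℤ) - qv^(-(r:ℤ)) ≠ 0 := by
    simp only [zpow_neg, zpow_natCast]; exact hb
  have key : Cmat M N r * Dmat M N r = triMat dd ss tt (M+N-1) := by
    ext i j
    have hi2 : (i:ℕ) < M+N-1 := i.2
    have hj2 : (j:ℕ) < M+N-1 := j.2
    simp only [Dmat, Matrix.mul_diagonal, Cmat, Matrix.of_apply, triMat]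
    simp only [epsStd_cast M N hN (show 1 ≤ (j:ℕ)+1 by omega) (show (j:ℕ)+1 ≤ M+N by omega)]
    have hcast1 : (((((j:ℕ)+1 :ℕ)) : ZMod (M+N))) + 1 = (((j:ℕ)+2 : ℕ) : ZMod (M+N)) := by
      push_cast; ring
    have hcast2 : (((((i:ℕ)+1 :ℕ)) : ZMod (M+N))) + 1 = (((i:ℕ)+2 : ℕ) : ZMod (M+N)) := by
      push_cast; ring
    have hne : ((((i:ℕ)+1 :ℕ)) : ZMod (M+N)) ≠ ((((i:ℕ)+1 : ℕ)) : ZMod (M+N)) + 1 := by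
      rw [hcast2, Ne, ceq _ _ (by omega) (by omega) (by omega) (by omega)]
      omega
    rw [qAF_eq qv (epsStd M N) _ _ hne, alphaW_apply, alphaW_apply]
    simp only [hcast1, hcast2]
    simp only [ceq ((i:ℕ)+1) ((j:ℕ)+1) (by omega) (by omega) (by omega) (by omega),
      ceq ((i:ℕ)+1) ((j:ℕ)+2) (by omega) (by omega) (by omega) (by omega),
      ceq ((i:ℕ)+2) ((j:ℕ)+1) (by omega) (by omega) (by omega) (by omega),
      ceq ((i:ℕ)+2) ((j:ℕ)+2) (by omega) (by omega) (by omega) (by omega)]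
    rw [qiF_cast M N hN (show 1 ≤ (i:ℕ)+1 by omega) (by omega),
      qiF_cast M N hN (show 1 ≤ (i:ℕ)+2 by omega) (by omega)]
    simp only [decide_eq_true_eq]
    by_cases h1 : (i:ℕ) = (j:ℕ)
    · -- diagonal
      rw [if_pos (show (i:ℕ)+1 = (j:ℕ)+1 by omega),
        if_neg (show ¬((i:ℕ)+1 = (j:ℕ)+2) by omega),
        if_neg (show ¬((i:ℕ)+2 = (j:ℕ)+1) by omega),
        if_pos (show (i:ℕ)+2 = (j:ℕ)+2 by omega), if_pos h1]
      rw [show ((1:ℤ) - 0) = 1 by norm_num, show (-((0:ℤ)-1)) = 1 by norm_num,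
        zpow_one, zpow_one]
      by_cases hm1 : (i:ℕ)+1 < M
      · rw [if_neg (show ¬(M < (i:ℕ)+1) by omega), if_neg (show ¬(M < (i:ℕ)+2) by omega),
          if_neg (show ¬(M < (j:ℕ)+1) by omega)]
        simp only [hdd]
        rw [if_neg (show ¬((i:ℕ) = M-1) by omega)]
        exact G1 qv r hx hb
      · by_cases hm2 : (i:ℕ)+1 = M
        · rw [if_neg (show ¬(M < (i:ℕ)+1) by omega), if_pos (show M < (i:ℕ)+2 by omega),
            if_neg (show ¬(M < (j:ℕ)+1) by omega)]
          simp only [hdd]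
          rw [if_pos (show (i:ℕ) = M-1 by omega)]
          exact G2 qv r hx
        · rw [if_pos (show M < (i:ℕ)+1 by omega), if_pos (show M < (i:ℕ)+2 by omega),
            if_pos (show M < (j:ℕ)+1 by omega)]
          simp only [hdd]
          rw [if_neg (show ¬((i:ℕ) = M-1) by omega)]
          exact G3 qv r hx hb hu
    · by_cases h2 : (i:ℕ)+1 = (j:ℕ)
      · -- superdiagonal
        rw [if_neg (show ¬((i:ℕ)+1 = (j:ℕ)+1) by omega),
          if_neg (show ¬((i:ℕ)+1 = (j:ℕ)+2) by omega),
          if_pos (show (i:ℕ)+2 = (j:ℕ)+1 by omega),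
          if_neg (show ¬((i:ℕ)+2 = (j:ℕ)+2) by omega),
          if_neg h1, if_pos h2]
        rw [show ((0:ℤ) - 0) = 0 by norm_num, show (-((1:ℤ)-0)) = -1 by norm_num,
          zpow_zero, one_mul]
        simp only [hss]
        by_cases hm1 : (i:ℕ)+2 ≤ M
        · rw [if_neg (show ¬(M < (i:ℕ)+1) by omega), if_neg (show ¬(M < (i:ℕ)+2) by omega),
            if_neg (show ¬(M < (j:ℕ)+1) by omega), if_pos (show (i:ℕ)+1 < M by omega)]
          exact G4 qv r hx hb
        · by_cases hm2 : (i:ℕ)+1 = M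
          · rw [if_neg (show ¬(M < (i:ℕ)+1) by omega), if_pos (show M < (i:ℕ)+2 by omega),
              if_pos (show M < (j:ℕ)+1 by omega),
              if_neg (show ¬((i:ℕ)+1 < M) by omega), if_pos (show (i:ℕ)+1 = M by omega)]
            exact G5 qv r hx hb hu
          · rw [if_pos (show M < (i:ℕ)+1 by omega), if_pos (show M < (i:ℕ)+2 by omega),
              if_pos (show M < (j:ℕ)+1 by omega),
              if_neg (show ¬((i:ℕ)+1 < M) by omega),
              if_neg (show ¬((i:ℕ)+1 = M) by omega)]
            exact G6 qv r hx hb hu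
      · by_cases h3 : (j:ℕ)+1 = (i:ℕ)
        · -- subdiagonal
          rw [if_neg (show ¬((i:ℕ)+1 = (j:ℕ)+1) by omega),
            if_pos (show (i:ℕ)+1 = (j:ℕ)+2 by omega),
            if_neg (show ¬((i:ℕ)+2 = (j:ℕ)+1) by omega),
            if_neg (show ¬((i:ℕ)+2 = (j:ℕ)+2) by omega),
            if_neg h1, if_neg h2, if_pos h3]
          rw [show ((0:ℤ) - 1) = -1 by norm_num, show (-((0:ℤ)-0)) = 0 by norm_num,
            zpow_zero, mul_one]
          simp only [htt]
          by_cases hm1 : M < (j:ℕ)+1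
          · rw [if_pos hm1, if_neg (show ¬((j:ℕ) < M) by omega)]
            refine G7 r _ _ ?_
            by_cases hm : M < (i:ℕ)+1
            · rw [if_pos hm]; exact hdN
            · rw [if_neg hm]; exact hdP
          · rw [if_neg hm1, if_pos (show (j:ℕ) < M by omega)]
            refine G7 r _ _ ?_
            by_cases hm : M < (i:ℕ)+1
            · rw [if_pos hm]; exact hdN
            · rw [if_neg hm]; exact hdP
        · -- far
          rw [if_neg (show ¬((i:ℕ)+1 = (j:ℕ)+1) by omega),
            if_neg (show ¬((i:ℕ)+1 = (j:ℕ)+2) by omega),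
            if_neg (show ¬((i:ℕ)+2 = (j:ℕ)+1) by omega),
            if_neg (show ¬((i:ℕ)+2 = (j:ℕ)+2) by omega),
            if_neg h1, if_neg h2, if_neg h3]
          rw [show ((0:ℤ) - 0) = 0 by norm_num, neg_zero, zpow_zero, zpow_zero, mul_one]
          simp
  have hyz : ∀ w : ℤ, y ^ w = qv ^ ((r:ℤ) * w) := by
    intro w; rw [hydef, ← zpow_natCast qv r, ← zpow_mul]
  have hstt : (fun i => ss i * tt i) = (fun i => if i = M-1 then (-1:KK) else 1) := by
    funext i2
    simp only [hss, htt]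
    by_cases c1 : i2+1 < M
    · rw [if_pos c1, if_pos (show i2 < M by omega), if_neg (show ¬(i2 = M-1) by omega)]
      norm_num
    · by_cases c2 : i2+1 = M
      · rw [if_neg c1, if_pos c2, if_pos (show i2 < M by omega),
          if_pos (show i2 = M-1 by omega)]
        norm_num
      · rw [if_neg c1, if_neg c2, if_neg (show ¬(i2 < M) by omega),
          if_neg (show ¬(i2 = M-1) by omega), neg_mul_neg, hu]
  have hdetCD : (Cmat M N r * Dmat M N r).det = -Qn y ((M:ℤ)-(N:ℤ)) := by
    rw [key, det_triMat, cont_mul, hstt, hdd,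
      contZ y hy hy2 (M-1) (M+N-1) (by omega),
      show (2*((M-1:ℕ):ℤ)+1-((M+N-1:ℕ):ℤ)) = (M:ℤ)-(N:ℤ) by omega]
  constructor
  · rw [hdetCD, Qn, ← neg_div, hyz, hyz,
      show (r:ℤ) * -((M:ℤ)-(N:ℤ)) = -((r:ℤ)*((M:ℤ)-(N:ℤ))) by ring,
      show y - y⁻¹ = qv^(r:ℤ) - qv^(-(r:ℤ)) by
        rw [hydef, ← zpow_natCast qv r, zpow_neg]]
  · have hQn : Qn y ((M:ℤ)-(N:ℤ)) ≠ 0 := by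
      rw [Qn]
      apply div_ne_zero _ hb
      intro hc
      rw [sub_eq_zero] at hc
      have h2 : y ^ ((M:ℤ)-(N:ℤ)) * y ^ ((M:ℤ)-(N:ℤ)) = 1 := by
        nth_rewrite 2 [hc]
        rw [← zpow_add₀ hy, show ((M:ℤ)-(N:ℤ)) + -((M:ℤ)-(N:ℤ)) = 0 by ring, zpow_zero]
      have h3 : (qv:KK) ^ ((r:ℤ)*((M:ℤ)-(N:ℤ)) + (r:ℤ)*((M:ℤ)-(N:ℤ))) = 1 := by
        rw [zpow_add₀ hx, ← hyz ((M:ℤ)-(N:ℤ))]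
        exact h2
      have hz0 : (M:ℤ)-(N:ℤ) ≠ 0 := by
        have : (M:ℤ) ≠ (N:ℤ) := by exact_mod_cast hMN
        omega
      refine hxz _ ?_ h3
      rw [show (r:ℤ)*((M:ℤ)-(N:ℤ)) + (r:ℤ)*((M:ℤ)-(N:ℤ))
        = 2*((r:ℤ)*((M:ℤ)-(N:ℤ))) by ring]
      exact mul_ne_zero two_ne_zero (mul_ne_zero (by omega) hz0)
    have hCD0 : (Cmat M N r).det * (Dmat M N r).det ≠ 0 := by
      rw [← Matrix.det_mul, hdetCD]
      exact neg_ne_zero.mpr hQn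
    exact isUnit_iff_ne_zero.mpr (left_ne_zero_of_mul hCD0)

end GQG
end
end
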